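/- Let π : ℝ³ → ℝ² denote the vertical projection π(x, y, z) = (x, y). For each of two agents i ∈ {A, B}, let ζᵢ ≥ 0, let sᶦ ∈ ℝ³ be a sensor position with third coordinate sᶦ₃ > 0, and let U_{i,1}, …, U_{i,nᵢ} ⊆ ℝ² be inflated polyhedra, where each U_{i,k} = {x ∈ ℝ² : ⟨a^{ik}_l, x⟩ + b^{ik}_l ≤ ‖a^{ik}_l‖·ζᵢ for all l = 1, …, n^h_{ik}}. Let P ⊆ ℝ³ be an obstacle such that, for each agent i ∈ {A, B}, P decomposes as P = P₁ⁱ ∪ P₂ⁱ where: every q ∈ P₁ⁱ has third coordinate 0 ≤ q₃ < sᶦ₃ and there exist an index k(q) and a point x' with ‖q − x'‖ ≤ ζᵢ, ⟨a^{ik(q)}_l, π(x')⟩ + b^{ik(q)}_l ≤ 0 for all l, and π(sᶦ + (sᶦ₃/(sᶦ₃ − q₃))·(q − sᶦ)) ∈ U_{i,k(q)}; and every p ∈ P₂ⁱ can be written p = sᶦ + u·(q − sᶦ) for some q ∈ P₁ⁱ and u ∈ [1, sᶦ₃/(sᶦ₃ − q₃)]. Then π(P) ⊆ (U_{A,1}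 ∪ … ∪ U_{A,n_A}) ∩ (U_{B,1} ∪ … ∪ U_{B,n_B}). -/

import Mathlib

open scoped RealInnerProductSpace

/-! The occupied areas are convex and `π` is linear, so an occupied area that contains the
projections of a visible point `q` and of its oblique ground projection `s + t • (q - s)`
contains the projection of the whole ray segment `s + u • (q - s)`, `1 ≤ u ≤ t`, on which
the occluded points lie. The projection of `q` itself lies in the area because `π` is
`1`-Lipschitz and each constraint `⟪a, ·⟫ + b ≤ 0` is relaxed by `‖a‖ * ζ`. -/

/-- The vertical projection `π : ℝ³ → ℝ²`, `π (x, y, z) = (x, y)`. -/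
def vertProj (p : EuclideanSpace ℝ (Fin 3)) : EuclideanSpace ℝ (Fin 2) := WithLp.toLp 2 ![p 0, p 1]

section InnerProductSpace

variable {F : Type*} [NormedAddCommGroup F] [InnerProductSpace ℝ F]

lemma inner_add_le_norm_mul_of_norm_sub_le {a x y : F} {b ζ : ℝ} (hy : ⟪a, y⟫ + b ≤ 0)
    (hxy : ‖x - y‖ ≤ ζ) : ⟪a, x⟫ + b ≤ ‖a‖ * ζ :=
  calc ⟪a, x⟫ + b = ⟪a, y⟫ + b + ⟪a, x - y⟫ := by rw [inner_sub_right]; ring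
    _ ≤ 0 + ‖a‖ * ‖x - y‖ := add_le_add hy (real_inner_le_norm a _)
    _ ≤ ‖a‖ * ζ := by rw [zero_add]; exact mul_le_mul_of_nonneg_left hxy (norm_nonneg a)

lemma convex_setOf_forall_inner_add_le {ι : Type*} (a : ι → F) (b c : ι → ℝ) :
    Convex ℝ {x | ∀ l, ⟪a l, x⟫ + b l ≤ c l} := by
  simp only [Set.ofPred_forall, ← le_sub_iff_add_le]
  exact convex_iInter fun l => convex_halfSpace_le (innerₗ F (a l)).isLinear _

end InnerProductSpace

lemma Convex.affineMap_mem_of_mem_Icc {F : Type*} [AddCommGroup F] [Module ℝ F] {C : Set F}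
    (hC : Convex ℝ C) (f : ℝ →ᵃ[ℝ] F) {r t u : ℝ} (hr : f r ∈ C) (ht : f t ∈ C)
    (hu : u ∈ Set.Icc r t) : f u ∈ C :=
  (hC.affine_preimage f).ordConnected.out hr ht hu

def vertProjₗ : EuclideanSpace ℝ (Fin 3) →ₗ[ℝ] EuclideanSpace ℝ (Fin 2) where
  toFun := vertProj
  map_add' x y := by ext i; fin_cases i <;> simp [vertProj]
  map_smul' c x := by ext i; fin_cases i <;> simp [vertProj]

lemma norm_vertProj_le (v : EuclideanSpace ℝ (Fin 3)) : ‖vertProj v‖ ≤ ‖v‖ := by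
  rw [EuclideanSpace.norm_eq, EuclideanSpace.norm_eq]
  apply Real.sqrt_le_sqrt
  simp only [vertProj, Real.norm_eq_abs, sq_abs, Fin.sum_univ_two, Fin.sum_univ_three,
    Matrix.cons_val_zero, Matrix.cons_val_one, Matrix.cons_val_fin_one, le_add_iff_nonneg_right]
  positivity

lemma norm_vertProj_sub_le (x y : EuclideanSpace ℝ (Fin 3)) :
    ‖vertProj x - vertProj y‖ ≤ ‖x - y‖ :=
  map_sub vertProjₗ x y ▸ norm_vertProj_le (x - y)

lemma Convex.vertProj_ray_mem {C : Set (EuclideanSpace ℝ (Fin 2))} (hC : Convex ℝ C)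
    {s q : EuclideanSpace ℝ (Fin 3)} {t u : ℝ} (hq : vertProj q ∈ C)
    (ht : vertProj (s + t • (q - s)) ∈ C) (hu : u ∈ Set.Icc 1 t) :
    vertProj (s + u • (q - s)) ∈ C := by
  have ray (v : ℝ) : vertProj (s + v • (q - s)) =
      (vertProjₗ.toAffineMap.comp (AffineMap.lineMap s q)) v := by
    change vertProjₗ _ = vertProjₗ (AffineMap.lineMap s q v)
    rw [AffineMap.lineMap_apply, vsub_eq_sub, vadd_eq_add, add_comm]
  rw [ray] at ht ⊢
  refine hC.affineMap_mem_of_mem_Icc _ ?_ ht hu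
  rwa [← ray, one_smul, add_sub_cancel]

theorem updated_unsafe_region_covers_obstacle_general
    (ζ : Fin 2 → ℝ)
    (s : Fin 2 → EuclideanSpace ℝ (Fin 3))
    (n : Fin 2 → ℕ) (nh : (i : Fin 2) → Fin (n i) → ℕ)
    (a : (i : Fin 2) → (k : Fin (n i)) → Fin (nh i k) → EuclideanSpace ℝ (Fin 2))
    (b : (i : Fin 2) → (k : Fin (n i)) → Fin (nh i k) → ℝ)
    (U : (i : Fin 2) → Fin (n i) → Set (EuclideanSpace ℝ (Fin 2)))
    (hU : ∀ i k, U i k =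
      {x : EuclideanSpace ℝ (Fin 2) | ∀ l, ⟪a i k l, x⟫ + b i k l ≤ ‖a i k l‖ * ζ i})
    (P : Set (EuclideanSpace ℝ (Fin 3)))
    (P₁ P₂ : Fin 2 → Set (EuclideanSpace ℝ (Fin 3)))
    (hdecomp : ∀ i, P = P₁ i ∪ P₂ i)
    (hP₁ : ∀ i, ∀ q ∈ P₁ i, (0 ≤ q 2 ∧ q 2 < s i 2) ∧
      ∃ k : Fin (n i), ∃ x' : EuclideanSpace ℝ (Fin 3),
        ‖q - x'‖ ≤ ζ i ∧ (∀ l, ⟪a i k l, vertProj x'⟫ + b i k l ≤ 0) ∧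
        vertProj (s i + (s i 2 / (s i 2 - q 2)) • (q - s i)) ∈ U i k)
    (hP₂ : ∀ i, ∀ p ∈ P₂ i, ∃ q ∈ P₁ i,
      ∃ u ∈ Set.Icc (1 : ℝ) (s i 2 / (s i 2 - q 2)), p = s i + u • (q - s i)) :
    vertProj '' P ⊆ (⋃ k, U 0 k) ∩ (⋃ k, U 1 k) := by
  have visible : ∀ i, ∀ q ∈ P₁ i, ∃ k, vertProj q ∈ U i k ∧
      vertProj (s i + (s i 2 / (s i 2 - q 2)) • (q - s i)) ∈ U i k := by
    intro i q hq
    obtain ⟨-, k, x', hqx', hx', hoblique⟩ := hP₁ i q hq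
    refine ⟨k, ?_, hoblique⟩
    rw [hU]
    exact fun l => inner_add_le_norm_mul_of_norm_sub_le (hx' l)
      ((norm_vertProj_sub_le q x').trans hqx')
  have covers : ∀ i, ∀ p ∈ P, vertProj p ∈ ⋃ k, U i k := by
    intro i p hp
    rcases hdecomp i ▸ hp with hp | hp
    · obtain ⟨k, hk, -⟩ := visible i p hp
      exact Set.mem_iUnion.2 ⟨k, hk⟩
    · obtain ⟨q, hq, u, hu, rfl⟩ := hP₂ i p hp
      obtain ⟨k, hk, hoblique⟩ := visible i q hq
      have hconvex : Convex ℝ (U i k) := hU i k ▸ convex_setOf_forall_inner_add_le _ _ _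
      exact Set.mem_iUnion.2 ⟨k, hconvex.vertProj_ray_mem hk hoblique hu⟩
  rintro _ ⟨p, hp, rfl⟩
  exact ⟨covers 0 p hp, covers 1 p hp⟩

/-- Geometric form of Theorem 1 of the paper: the updated unsafe region, i.e. the
intersection over the two agents `i : Fin 2` of the unions of their occupied areas
`U i k`, contains the vertical projection of every true obstacle `P`. For each agent
`i`, the obstacle decomposes as `P = P₁ i ∪ P₂ i` into points visible to the agent's
sensor `s i` (each within `ζ i` of a scan point whose projection satisfies the
unrelaxed constraints of some occupied area, and whose oblique ground projection lies
in that occupied area) and points occluded along rays through visible points. -/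
theorem updated_unsafe_region_covers_obstacle
    (ζ : Fin 2 → ℝ) (hζ : ∀ i, 0 ≤ ζ i)
    (s : Fin 2 → EuclideanSpace ℝ (Fin 3)) (hs : ∀ i, 0 < s i 2)
    (n : Fin 2 → ℕ) (nh : (i : Fin 2) → Fin (n i) → ℕ)
    (a : (i : Fin 2) → (k : Fin (n i)) → Fin (nh i k) → EuclideanSpace ℝ (Fin 2))
    (b : (i : Fin 2) → (k : Fin (n i)) → Fin (nh i k) → ℝ)
    (U : (i : Fin 2) → Fin (n i) → Set (EuclideanSpace ℝ (Fin 2)))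
    (hU : ∀ i k, U i k =
      {x : EuclideanSpace ℝ (Fin 2) | ∀ l, ⟪a i k l, x⟫ + b i k l ≤ ‖a i k l‖ * ζ i})
    (P : Set (EuclideanSpace ℝ (Fin 3)))
    (P₁ P₂ : Fin 2 → Set (EuclideanSpace ℝ (Fin 3)))
    (hdecomp : ∀ i, P = P₁ i ∪ P₂ i)
    (hP₁ : ∀ i, ∀ q ∈ P₁ i, (0 ≤ q 2 ∧ q 2 < s i 2) ∧
      ∃ k : Fin (n i), ∃ x' : EuclideanSpace ℝ (Fin 3),
        ‖q - x'‖ ≤ ζ i ∧ (∀ l, ⟪a i k l, vertProj x'⟫ + b i k l ≤ 0) ∧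
        vertProj (s i + (s i 2 / (s i 2 - q 2)) • (q - s i)) ∈ U i k)
    (hP₂ : ∀ i, ∀ p ∈ P₂ i, ∃ q ∈ P₁ i,
      ∃ u ∈ Set.Icc (1 : ℝ) (s i 2 / (s i 2 - q 2)), p = s i + u • (q - s i)) :
    vertProj '' P ⊆ (⋃ k, U 0 k) ∩ (⋃ k, U 1 k) :=
  updated_unsafe_region_covers_obstacle_general ζ s n nh a b U hU P P₁ P₂ hdecomp hP₁ hP₂
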